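/- arXiv:2009.05975 — 4 statements merged into one kernel-verified Lean document; each statement's English description precedes it below -/
import Mathlib

section
/- Define on ℝ⁴ the symmetric bilinear form g with matrix entries g₁₃ = g₃₁ = g₂₄ = g₄₂ = 1 and all other entries 0, and the linear map K = diag(1, 1, −1, −1). For A ∈ GL₂(ℝ), let T(A) ∈ GL₄(ℝ) be the block-diagonal matrix diag(A, (Aᵀ)⁻¹). Then: (i) T : GL₂(ℝ) → GL₄(ℝ) is an injective group homomorphism; (ii) det T(A) = 1 for all A; (iii) the image of T is exactly the set of U ∈ GL₄(ℝ) such that g(Ux, Uy) = g(x, y) for all x, y ∈ ℝ⁴ and U ∘ K = K ∘ U. -/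
/-!
Split `ℝ⁴ = ℝ² ⊕ ℝ²`. Then `K = diag(1, -1)` and the Gram matrix of `g` is `J = [[0, 1], [1, 0]]`.
A matrix commutes with `K` exactly when it is block diagonal, `diag(A, D)`, and such a matrix
preserves `g`, i.e. `diag(A, D)ᵀ J diag(A, D) = J`, exactly when `Aᵀ D = 1`, i.e. `D = (Aᵀ)⁻¹`.
-/

noncomputable section

/-- The split-signature bilinear form on ℝ⁴: g(x,y) = x₁y₃ + x₃y₁ + x₂y₄ + x₄y₂. -/
def gSplit (x y : Fin 4 → ℝ) : ℝ := x 0 * y 2 + x 2 * y 0 + x 1 * y 3 + x 3 * y 1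

/-- The paracomplex structure K = diag(1,1,-1,-1) as a matrix. -/
def Kmat : Matrix (Fin 4) (Fin 4) ℝ := Matrix.diagonal ![1, 1, -1, -1]

/-- The block-diagonal embedding A ↦ diag(A, (Aᵀ)⁻¹) of 2×2 matrices into 4×4 matrices. -/
def Tmat (A : Matrix (Fin 2) (Fin 2) ℝ) : Matrix (Fin 4) (Fin 4) ℝ :=
  Matrix.reindex finSumFinEquiv finSumFinEquiv
    (Matrix.fromBlocks A 0 0 A.transpose⁻¹)

open Matrix

namespace Matrix

variable {n R : Type*} [Fintype n]

theorem dotProduct_mulVec_mulVec_mulVec [CommSemiring R] (U G : Matrix n n R) (x y : n → R) :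
    U *ᵥ x ⬝ᵥ G *ᵥ (U *ᵥ y) = x ⬝ᵥ (Uᵀ * G * U) *ᵥ y := by
  rw [dotProduct_mulVec, ← vecMul_transpose, vecMul_vecMul, ← dotProduct_mulVec, mulVec_mulVec]

theorem forall_dotProduct_mulVec_mulVec_iff [DecidableEq n] [CommSemiring R]
    (U G : Matrix n n R) :
    (∀ x y, U *ᵥ x ⬝ᵥ G *ᵥ (U *ᵥ y) = x ⬝ᵥ G *ᵥ y) ↔ Uᵀ * G * U = G := by
  simp only [dotProduct_mulVec_mulVec_mulVec]
  refine ⟨fun h => ?_, fun h => by simp [h]⟩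
  ext i j
  simpa [mulVec_single_one, single_one_dotProduct] using h (Pi.single i 1) (Pi.single j 1)

variable [DecidableEq n]

theorem commute_fromBlocks_one_neg_one_iff [Ring R] [NoZeroDivisors R] [CharZero R]
    (M : Matrix (n ⊕ n) (n ⊕ n) R) :
    M * fromBlocks 1 0 0 (-1) = fromBlocks 1 0 0 (-1) * M ↔
      M.toBlocks₁₂ = 0 ∧ M.toBlocks₂₁ = 0 := by
  conv_lhs => rw [← fromBlocks_toBlocks M]
  simp [fromBlocks_multiply, ← Matrix.ext_iff, CharZero.neg_eq_self_iff,
    CharZero.eq_neg_self_iff]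

theorem fromBlocks_diagonal_transpose_mul_swap_mul [CommRing R] (A D : Matrix n n R) :
    (fromBlocks A 0 0 D)ᵀ * fromBlocks 0 1 1 0 * fromBlocks A 0 0 D =
      fromBlocks 0 (Aᵀ * D) (Dᵀ * A) 0 := by
  simp [fromBlocks_transpose, fromBlocks_multiply]

theorem isometry_and_commute_iff_eq_fromBlocks_inv_transpose [CommRing R] [NoZeroDivisors R] [CharZero R]
    (M : Matrix (n ⊕ n) (n ⊕ n) R) :
    (Mᵀ * fromBlocks 0 1 1 0 * M = fromBlocks 0 1 1 0 ∧
        M * fromBlocks 1 0 0 (-1) = fromBlocks 1 0 0 (-1) * M) ↔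
      ∃ A : Matrix n n R, IsUnit A.det ∧ M = fromBlocks A 0 0 Aᵀ⁻¹ := by
  rw [commute_fromBlocks_one_neg_one_iff]
  constructor
  · rintro ⟨hiso, hB, hC⟩
    have hM : M = fromBlocks M.toBlocks₁₁ 0 0 M.toBlocks₂₂ := by
      conv_lhs => rw [← fromBlocks_toBlocks M, hB, hC]
    generalize M.toBlocks₁₁ = A, M.toBlocks₂₂ = D at hM
    subst hM
    rw [fromBlocks_diagonal_transpose_mul_swap_mul, fromBlocks_inj] at hiso
    have hAD : Aᵀ * D = 1 := hiso.2.1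
    have hA : IsUnit A.det := by simpa using isUnit_det_of_right_inverse hAD
    exact ⟨A, hA, by rw [inv_eq_right_inv hAD]⟩
  · rintro ⟨A, hA, rfl⟩
    have hAt : IsUnit Aᵀ.det := by rwa [det_transpose]
    refine ⟨?_, by simp, by simp⟩
    rw [fromBlocks_diagonal_transpose_mul_swap_mul, mul_nonsing_inv _ hAt,
      transpose_nonsing_inv, transpose_transpose, nonsing_inv_mul _ hA]

end Matrix

theorem Tmat_mul (A B : Matrix (Fin 2) (Fin 2) ℝ) : Tmat (A * B) = Tmat A * Tmat B := by
  simp [Tmat, fromBlocks_multiply, transpose_mul, Matrix.mul_inv_rev]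

theorem Tmat_injective : Function.Injective Tmat := fun A B h => by
  simpa using congrArg toBlocks₁₁ ((reindex finSumFinEquiv finSumFinEquiv).injective h)

theorem det_Tmat {A : Matrix (Fin 2) (Fin 2) ℝ} (hA : IsUnit A.det) : (Tmat A).det = 1 := by
  rw [Tmat, det_reindex_self, det_fromBlocks_zero₂₁, det_nonsing_inv, det_transpose,
    Ring.inverse_eq_inv', mul_inv_cancel₀ hA.ne_zero]

theorem Kmat_eq_reindex :
    Kmat = reindex finSumFinEquiv finSumFinEquiv
      (fromBlocks 1 0 0 (-1) : Matrix (Fin 2 ⊕ Fin 2) (Fin 2 ⊕ Fin 2) ℝ) := by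
  ext i j
  fin_cases i <;> fin_cases j <;> simp [Kmat, finSumFinEquiv, Fin.addCases, Fin.subNat]

theorem gSplit_eq_dotProduct_mulVec (x y : Fin 4 → ℝ) :
    gSplit x y = x ⬝ᵥ reindex finSumFinEquiv finSumFinEquiv
      (fromBlocks 0 1 1 0 : Matrix (Fin 2 ⊕ Fin 2) (Fin 2 ⊕ Fin 2) ℝ) *ᵥ y := by
  simp [gSplit, dotProduct, mulVec, Fin.sum_univ_four, finSumFinEquiv, Fin.addCases, Fin.subNat]
  ring

theorem gSplit_isometry_and_commute_Kmat_iff (M : Matrix (Fin 2 ⊕ Fin 2) (Fin 2 ⊕ Fin 2) ℝ) :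
    ((∀ x y, gSplit (reindex finSumFinEquiv finSumFinEquiv M *ᵥ x)
        (reindex finSumFinEquiv finSumFinEquiv M *ᵥ y) = gSplit x y) ∧
      reindex finSumFinEquiv finSumFinEquiv M * Kmat =
        Kmat * reindex finSumFinEquiv finSumFinEquiv M) ↔
      (Mᵀ * fromBlocks 0 1 1 0 * M = fromBlocks 0 1 1 0 ∧
        M * fromBlocks 1 0 0 (-1) = fromBlocks 1 0 0 (-1) * M) := by
  simp only [gSplit_eq_dotProduct_mulVec, forall_dotProduct_mulVec_mulVec_iff, Kmat_eq_reindex,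
    reindex_apply, transpose_submatrix, submatrix_mul_equiv]
  simp only [← reindex_apply, (reindex _ _).injective.eq_iff]

/-- T is an injective group homomorphism GL₂(ℝ) → GL₄(ℝ),
det T(A) = 1, and its image is exactly the set of invertible matrices preserving g
and commuting with K. -/
theorem stmt_2 :
    (∀ A B : Matrix (Fin 2) (Fin 2) ℝ, IsUnit A.det → IsUnit B.det →
      Tmat (A * B) = Tmat A * Tmat B) ∧
    (∀ A B : Matrix (Fin 2) (Fin 2) ℝ, IsUnit A.det → IsUnit B.det →
      Tmat A = Tmat B → A = B) ∧
    (∀ A : Matrix (Fin 2) (Fin 2) ℝ, IsUnit A.det → (Tmat A).det = 1) ∧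
    (∀ U : Matrix (Fin 4) (Fin 4) ℝ, IsUnit U.det →
      (((∀ x y : Fin 4 → ℝ, gSplit (U.mulVec x) (U.mulVec y) = gSplit x y) ∧
        U * Kmat = Kmat * U) ↔
       ∃ A : Matrix (Fin 2) (Fin 2) ℝ, IsUnit A.det ∧ U = Tmat A)) := by
  refine ⟨fun A B _ _ => Tmat_mul A B, fun A B _ _ h => Tmat_injective h,
    fun A hA => det_Tmat hA, fun U _ => ?_⟩
  obtain ⟨M, rfl⟩ : ∃ M : Matrix (Fin 2 ⊕ Fin 2) (Fin 2 ⊕ Fin 2) ℝ,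
      reindex finSumFinEquiv finSumFinEquiv M = U := (reindex _ _).surjective U
  rw [gSplit_isometry_and_commute_Kmat_iff, isometry_and_commute_iff_eq_fromBlocks_inv_transpose]
  simp only [Tmat, (reindex finSumFinEquiv finSumFinEquiv).injective.eq_iff]
end
end

section
/- Let s ≠ 0 be a real constant and define on the open set of (a,b,x,y) ∈ ℝ⁴ where (1 − (3/2)s·a·x) > 0 and (1 − (3/2)s·b·y) > 0 the function V(a,b,x,y) = −(2/(3s))·log((1 − (3/2)s·a·x)(1 − (3/2)s·b·y)). Then the mixed second partial derivatives satisfy V_{ax}·V_{by} − V_{ay}·V_{bx} = e^{3sV}, i.e., V satisfies the para-Kähler–Einstein potential equation det[[V_{ax}, V_{ay}],[V_{bx}, V_{by}]] = c₁c₂·e^{−ΛV} with Λ = −3s and c₁c₂ = 1. -/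
/-!
With `c = 3s/2` the potential is `V = -c⁻¹ (log (1 - c a x) + log (1 - c b y))` locally, a sum of a
function of `(a, x)` and one of `(b, y)`. Hence the mixed derivatives `V_ay` and `V_bx` vanish, while
`V_x = a / (1 - c a x)` gives `V_ax = (1 - c a x)⁻²`, and likewise `V_by = (1 - c b y)⁻²`. Their
product is `((1 - c a x)(1 - c b y))⁻² = exp (2 c V)`.
-/

open Real Filter Topology

noncomputable def potential (c a b x y : ℝ) : ℝ :=
  -c⁻¹ * log ((1 - c * a * x) * (1 - c * b * y))

section

variable {c a b x y : ℝ}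

theorem potential_swap (c a b x y : ℝ) : potential c a b x y = potential c b a y x := by
  simp only [potential, mul_comm (1 - c * a * x)]

theorem hasDerivAt_potential_x (hc : c ≠ 0) (ha : 1 - c * a * x ≠ 0) (hb : 1 - c * b * y ≠ 0) :
    HasDerivAt (fun x' => potential c a b x' y) (a / (1 - c * a * x)) x := by
  have hfactor : HasDerivAt (fun x' => (1 - c * a * x') * (1 - c * b * y))
      (-(c * a) * (1 - c * b * y)) x := by
    simpa [mul_assoc] using
      (((hasDerivAt_id x).const_mul (c * a)).const_sub 1).mul_const (1 - c * b * y)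
  refine ((hfactor.log (mul_ne_zero ha hb)).const_mul (-c⁻¹)).congr_deriv ?_
  rw [mul_div_mul_right _ _ hb]
  field_simp

theorem deriv_deriv_potential_ax (hc : c ≠ 0) (ha : 1 - c * a * x ≠ 0) (hb : 1 - c * b * y ≠ 0) :
    deriv (fun a' => deriv (fun x' => potential c a' b x' y) x) a = 1 / (1 - c * a * x) ^ 2 := by
  have hev : (fun a' => deriv (fun x' => potential c a' b x' y) x)
      =ᶠ[𝓝 a] fun a' => a' / (1 - c * a' * x) := by
    have hne : ∀ᶠ a' in 𝓝 a, 1 - c * a' * x ≠ 0 :=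
      (by fun_prop : Continuous fun a' => 1 - c * a' * x).continuousAt.eventually_ne ha
    filter_upwards [hne] with a' ha' using (hasDerivAt_potential_x hc ha' hb).deriv
  have hden : HasDerivAt (fun a' => 1 - c * a' * x) (-(c * x)) a := by
    simpa using (((hasDerivAt_id a).const_mul c).mul_const x).const_sub 1
  rw [hev.deriv_eq, ((hasDerivAt_id' a).fun_div hden ha).deriv]
  field_simp
  ring

theorem deriv_deriv_potential_bx (hc : c ≠ 0) (ha : 1 - c * a * x ≠ 0) (hb : 1 - c * b * y ≠ 0) :
    deriv (fun b' => deriv (fun x' => potential c a b' x' y) x) b = 0 := by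
  have hev : (fun b' => deriv (fun x' => potential c a b' x' y) x)
      =ᶠ[𝓝 b] fun _ => a / (1 - c * a * x) := by
    have hne : ∀ᶠ b' in 𝓝 b, 1 - c * b' * y ≠ 0 :=
      (by fun_prop : Continuous fun b' => 1 - c * b' * y).continuousAt.eventually_ne hb
    filter_upwards [hne] with b' hb' using (hasDerivAt_potential_x hc ha hb').deriv
  rw [hev.deriv_eq, deriv_const]

theorem deriv_deriv_potential_by (hc : c ≠ 0) (ha : 1 - c * a * x ≠ 0) (hb : 1 - c * b * y ≠ 0) :
    deriv (fun b' => deriv (fun y' => potential c a b' x y') y) b = 1 / (1 - c * b * y) ^ 2 := by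
  simp only [potential_swap c a]
  exact deriv_deriv_potential_ax hc hb ha

theorem deriv_deriv_potential_ay (hc : c ≠ 0) (ha : 1 - c * a * x ≠ 0) (hb : 1 - c * b * y ≠ 0) :
    deriv (fun a' => deriv (fun y' => potential c a' b x y') y) a = 0 := by
  simp only [potential_swap c _ b]
  exact deriv_deriv_potential_bx hc hb ha

theorem exp_two_mul_potential (hc : c ≠ 0) (ha : 1 - c * a * x ≠ 0) (hb : 1 - c * b * y ≠ 0) :
    exp (2 * c * potential c a b x y) = 1 / ((1 - c * a * x) * (1 - c * b * y)) ^ 2 := by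
  have hsq : 0 < ((1 - c * a * x) * (1 - c * b * y)) ^ 2 := by positivity
  rw [potential, show 2 * c * (-c⁻¹ * log ((1 - c * a * x) * (1 - c * b * y)))
      = -log (((1 - c * a * x) * (1 - c * b * y)) ^ 2) by rw [log_pow]; field_simp; ring,
    exp_neg, exp_log hsq, one_div]

theorem potential_mixed_hessian_det (hc : c ≠ 0) (ha : 1 - c * a * x ≠ 0)
    (hb : 1 - c * b * y ≠ 0) :
    deriv (fun a' => deriv (fun x' => potential c a' b x' y) x) a *
        deriv (fun b' => deriv (fun y' => potential c a b' x y') y) b -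
      deriv (fun a' => deriv (fun y' => potential c a' b x y') y) a *
        deriv (fun b' => deriv (fun x' => potential c a b' x' y) x) b =
      exp (2 * c * potential c a b x y) := by
  rw [deriv_deriv_potential_ax hc ha hb, deriv_deriv_potential_by hc ha hb,
    deriv_deriv_potential_ay hc ha hb, deriv_deriv_potential_bx hc ha hb,
    exp_two_mul_potential hc ha hb]
  field_simp
  ring

end

/-- The potential V(a,b,x,y) = −(2/(3s))·log((1−(3/2)sax)(1−(3/2)sby))
satisfies the para-Kähler–Einstein potential equation
V_{ax}V_{by} − V_{ay}V_{bx} = e^{3sV} on the region where both factors are positive. -/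
theorem stmt_7 (s : ℝ) (hs : s ≠ 0)
    (V : ℝ → ℝ → ℝ → ℝ → ℝ)
    (hV : ∀ a b x y, V a b x y =
      -(2 / (3 * s)) * Real.log ((1 - (3 / 2) * s * a * x) * (1 - (3 / 2) * s * b * y)))
    (a b x y : ℝ)
    (h1 : 1 - (3 / 2) * s * a * x > 0) (h2 : 1 - (3 / 2) * s * b * y > 0) :
    (deriv (fun a' => deriv (fun x' => V a' b x' y) x) a) *
      (deriv (fun b' => deriv (fun y' => V a b' x y') y) b) -
    (deriv (fun a' => deriv (fun y' => V a' b x y') y) a) *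
      (deriv (fun b' => deriv (fun x' => V a b' x' y) x) b) =
    Real.exp (3 * s * V a b x y) := by
  set c := (3 / 2) * s with hc_def
  have hc : c ≠ 0 := by positivity
  obtain rfl : V = potential c := by
    funext a b x y
    rw [hV, potential, hc_def]
    field_simp
  rw [show 3 * s = 2 * c by ring]
  exact potential_mixed_hessian_det hc h1.ne' h2.ne'
end

section
/- Let s ≠ 0 be a real constant and define on the open set of (a,b,x,y) ∈ ℝ⁴ where D := b + a·x − y > 0 the function V(a,b,x,y) = −(1/s)·log(b + a·x − y). Then V_{ax}·V_{by} − V_{ay}·V_{bx} = (1/s²)·e^{3sV}, i.e., V satisfies the para-Kähler–Einstein potential equation det[[V_{ax}, V_{ay}],[V_{bx}, V_{by}]] = c₁c₂·e^{−ΛV} with Λ = −3s and c₁c₂ = 1/s². -/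
open Real Filter Topology

/-! `V` depends on the point only through `D = b + a x - y`, which is affine in each variable
separately. For such a potential `V = g ∘ D` the chain rule gives
`V_ax = g'' x a + g'`, `V_by = -g''`, `V_ay = -g'' x`, `V_bx = g'' a`, so the determinant collapses
to `-g' g''`. For `g = -(1/s) log` this is `1 / (s² D³) = e^{3sV} / s²`. -/

noncomputable def mixedHessianDet (V : ℝ → ℝ → ℝ → ℝ → ℝ) (a b x y : ℝ) : ℝ :=
  deriv (fun a' => deriv (fun x' => V a' b x' y) x) a *
      deriv (fun b' => deriv (fun y' => V a b' x y') y) b -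
    deriv (fun a' => deriv (fun y' => V a' b x y') y) a *
      deriv (fun b' => deriv (fun x' => V a b' x' y) x) b

theorem deriv_deriv_comp_bilinear {g g' g'' : ℝ → ℝ} {D : ℝ → ℝ → ℝ} {α β γ δ p q : ℝ}
    (hD : ∀ p q, D p q = α * p * q + β * p + γ * q + δ)
    (hg : ∀ᶠ u in 𝓝 (D p q), HasDerivAt g (g' u) u)
    (hg' : HasDerivAt g' (g'' (D p q)) (D p q)) :
    deriv (fun p' => deriv (fun q' => g (D p' q')) q) p =
      g'' (D p q) * (α * q + β) * (α * p + γ) + g' (D p q) * α := by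
  have hDq : ∀ p', HasDerivAt (fun q' => D p' q') (α * p' + γ) q := fun p' =>
    ((hasDerivAt_const_mul _).add_const (β * p' + δ)).congr_of_eventuallyEq
      (.of_forall fun q' => by simp only [hD]; ring)
  have hDp : HasDerivAt (fun p' => D p' q) (α * q + β) p :=
    ((hasDerivAt_const_mul _).add_const (γ * q + δ)).congr_of_eventuallyEq
      (.of_forall fun p' => by simp only [hD]; ring)
  have hinner : (fun p' => deriv (fun q' => g (D p' q')) q) =ᶠ[𝓝 p]
      fun p' => g' (D p' q) * (α * p' + γ) := by
    filter_upwards [hDp.continuousAt.eventually hg] with p' hp'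
    exact (hp'.comp q (hDq p')).deriv
  rw [hinner.deriv_eq]
  exact ((hg'.comp p hDp).mul ((hasDerivAt_const_mul α).add_const γ)).deriv

theorem mixedHessianDet_of_eq_comp {V : ℝ → ℝ → ℝ → ℝ → ℝ} {g g' g'' : ℝ → ℝ} {a b x y : ℝ}
    (hV : ∀ a b x y, V a b x y = g (b + a * x - y))
    (hg : ∀ᶠ u in 𝓝 (b + a * x - y), HasDerivAt g (g' u) u)
    (hg' : HasDerivAt g' (g'' (b + a * x - y)) (b + a * x - y)) :
    mixedHessianDet V a b x y = -(g' (b + a * x - y) * g'' (b + a * x - y)) := by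
  obtain rfl : V = fun a b x y => g (b + a * x - y) := by ext; exact hV ..
  unfold mixedHessianDet
  rw [deriv_deriv_comp_bilinear (D := fun a' x' => b + a' * x' - y) (α := 1) (β := 0) (γ := 0)
      (δ := b - y) (fun _ _ => by ring) hg hg',
    deriv_deriv_comp_bilinear (D := fun b' y' => b' + a * x - y') (α := 0) (β := 1) (γ := -1)
      (δ := a * x) (fun _ _ => by ring) hg hg',
    deriv_deriv_comp_bilinear (D := fun a' y' => b + a' * x - y') (α := 0) (β := x) (γ := -1)
      (δ := b) (fun _ _ => by ring) hg hg',
    deriv_deriv_comp_bilinear (D := fun b' x' => b' + a * x' - y) (α := 0) (β := 1) (γ := a)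
      (δ := -y) (fun _ _ => by ring) hg hg']
  ring

/-- The 'dancing metric' potential V(a,b,x,y) = −(1/s)·log(b + ax − y)
satisfies V_{ax}V_{by} − V_{ay}V_{bx} = (1/s²)·e^{3sV} on the region b + ax − y > 0. -/
theorem stmt_8 (s : ℝ) (hs : s ≠ 0)
    (V : ℝ → ℝ → ℝ → ℝ → ℝ)
    (hV : ∀ a b x y, V a b x y = -(1 / s) * Real.log (b + a * x - y))
    (a b x y : ℝ)
    (h1 : b + a * x - y > 0) :
    (deriv (fun a' => deriv (fun x' => V a' b x' y) x) a) *
      (deriv (fun b' => deriv (fun y' => V a b' x y') y) b) -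
    (deriv (fun a' => deriv (fun y' => V a' b x y') y) a) *
      (deriv (fun b' => deriv (fun x' => V a b' x' y) x) b) =
    (1 / s ^ 2) * Real.exp (3 * s * V a b x y) := by
  have hD : b + a * x - y ≠ 0 := h1.ne'
  have hexp : exp (3 * s * V a b x y) = ((b + a * x - y) ^ 3)⁻¹ := by
    rw [hV, ← exp_log (inv_pos.2 (pow_pos h1 3)), log_inv, log_pow]
    congr 1
    field_simp
    push_cast
    ring
  change mixedHessianDet V a b x y = _
  rw [mixedHessianDet_of_eq_comp (g := fun u => -(1 / s) * log u)
      (g'' := fun u => -(1 / s) * -(u ^ 2)⁻¹) hV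
      ((eventually_ne_nhds hD).mono fun u hu => (hasDerivAt_log hu).const_mul _)
      ((hasDerivAt_inv hD).const_mul _), hexp]
  field_simp
end

section
/- Let s ≠ 0 be a real constant, and let p : ℝ → ℝ and q : ℝ → ℝ be twice continuously differentiable functions. On an open set U ⊆ ℝ² where p(u) ≠ q(v) and 2·p'(u)·q'(v)/(−3s·(p(u)−q(v))²) > 0, define F(u,v) = log(2·p'(u)·q'(v)/(−3s·(p(u)−q(v))²)). Then F satisfies Liouville's equation ∂²F/∂u∂v = 3s·e^{F} on U. -/
/-!
On the region where the argument of the logarithm is positive, `F` splits as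
`log (2 / (-3 s)) + log p'(u) + log q'(v) - 2 log (p(u) - q(v))` (`Real.log` is `log |·|`,
so only the nonvanishing of the factors is needed, and positivity of the quotient gives it), so
`∂_u F = p''/p' - 2 p'/(p - q)` and `∂_v ∂_u F = -2 p' q' / (p - q)²`, which is
`3 s` times the argument of the logarithm, i.e. `3 s e^F`.
-/

open Real Filter Topology

theorem ne_zero_of_pos_mul_mul_div_mul_sq {c a b d e : ℝ} (h : 0 < c * a * b / (d * e ^ 2)) :
    c ≠ 0 ∧ a ≠ 0 ∧ b ≠ 0 ∧ d ≠ 0 ∧ e ≠ 0 := by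
  have hnum : c * a * b ≠ 0 := fun h0 => by simp [h0] at h
  have hden : d * e ^ 2 ≠ 0 := fun h0 => by simp [h0] at h
  simp only [ne_eq, mul_eq_zero, not_or, pow_eq_zero_iff two_ne_zero] at hnum hden
  exact ⟨hnum.1.1, hnum.1.2, hnum.2, hden⟩

theorem Real.log_mul_mul_div_mul_sq {c a b d e : ℝ} (h : 0 < c * a * b / (d * e ^ 2)) :
    log (c * a * b / (d * e ^ 2)) = log (c / d) + log a + log b - 2 * log e := by
  obtain ⟨hc, ha, hb, hd, he⟩ := ne_zero_of_pos_mul_mul_div_mul_sq h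
  rw [log_div (by positivity) (by positivity), log_mul (by positivity) hb,
    log_mul hc ha, log_mul hd (by positivity), log_pow, log_div hc hd]
  push_cast
  ring

theorem hasDerivAt_const_sub_two_mul_div_sub {q : ℝ → ℝ} {q' v : ℝ} (c a : ℝ) {b : ℝ}
    (hq : HasDerivAt q q' v) (hb : b - q v ≠ 0) :
    HasDerivAt (fun v' => c - 2 * (a / (b - q v'))) (-2 * a * q' / (b - q v) ^ 2) v :=
  (((hasDerivAt_const v a).div (hq.const_sub b) hb).const_mul 2).const_sub c
    |>.congr_deriv (by field_simp; ring)

noncomputable def liouvilleSolution (s : ℝ) (p q : ℝ → ℝ) (u v : ℝ) : ℝ :=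
  log (2 * deriv p u * deriv q v / (-3 * s * (p u - q v) ^ 2))

section liouvilleSolution

variable {s : ℝ} {p q : ℝ → ℝ} {u v : ℝ}

theorem hasDerivAt_liouvilleSolution_fst (hp : DifferentiableAt ℝ p u)
    (hp' : DifferentiableAt ℝ (deriv p) u)
    (hpos : ∀ᶠ u' in 𝓝 u, 0 < 2 * deriv p u' * deriv q v / (-3 * s * (p u' - q v) ^ 2)) :
    HasDerivAt (fun u' => liouvilleSolution s p q u' v)
      (deriv (deriv p) u / deriv p u - 2 * (deriv p u / (p u - q v))) u := by
  obtain ⟨-, hpu, -, -, hpq⟩ := ne_zero_of_pos_mul_mul_div_mul_sq hpos.self_of_nhds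
  have hsplit : HasDerivAt (fun u' => log (2 / (-3 * s)) + log (deriv p u') + log (deriv q v)
      - 2 * log (p u' - q v))
      (deriv (deriv p) u / deriv p u - 2 * (deriv p u / (p u - q v))) u :=
    (((hp'.hasDerivAt.log hpu).const_add _).add_const _).sub
      (((hp.hasDerivAt.sub_const _).log hpq).const_mul 2)
  exact hsplit.congr_of_eventuallyEq (hpos.mono fun _ h => log_mul_mul_div_mul_sq h)

theorem three_mul_exp_liouvilleSolution
    (hpos : 0 < 2 * deriv p u * deriv q v / (-3 * s * (p u - q v) ^ 2)) :
    3 * s * exp (liouvilleSolution s p q u v) = -2 * deriv p u * deriv q v / (p u - q v) ^ 2 := by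
  obtain ⟨-, -, -, h3s, hpq⟩ := ne_zero_of_pos_mul_mul_div_mul_sq hpos
  have hs : s ≠ 0 := right_ne_zero_of_mul h3s
  rw [liouvilleSolution, exp_log hpos]
  field_simp

end liouvilleSolution

theorem stmt_9_general (s : ℝ)
    (p q : ℝ → ℝ) (hp : ContDiff ℝ 2 p) (hq : ContDiff ℝ 2 q)
    (U : Set (ℝ × ℝ)) (hU : IsOpen U)
    (hpos : ∀ z ∈ U, 0 < 2 * deriv p z.1 * deriv q z.2 / (-3 * s * (p z.1 - q z.2) ^ 2))
    (F : ℝ → ℝ → ℝ)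
    (hF : ∀ u v, F u v =
      Real.log (2 * deriv p u * deriv q v / (-3 * s * (p u - q v) ^ 2))) :
    ∀ u v, (u, v) ∈ U →
      deriv (fun v' => deriv (fun u' => F u' v') u) v = 3 * s * Real.exp (F u v) := by
  obtain rfl : F = liouvilleSolution s p q := funext₂ hF
  intro u v huv
  have hinner : (fun v' => deriv (fun u' => liouvilleSolution s p q u' v') u) =ᶠ[𝓝 v]
      fun v' => deriv (deriv p) u / deriv p u - 2 * (deriv p u / (p u - q v')) := by
    filter_upwards [(hU.preimage (Continuous.prodMk_right u)).mem_nhds huv] with v' hv'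
    have hslice : ∀ᶠ u' in 𝓝 u, (u', v') ∈ U :=
      (hU.preimage (Continuous.prodMk_left v')).mem_nhds hv'
    exact (hasDerivAt_liouvilleSolution_fst (hp.differentiable two_ne_zero u)
      ((hp.iterate_deriv' 1 1).differentiable one_ne_zero u)
      (hslice.mono fun u' => hpos (u', v'))).deriv
  obtain ⟨-, -, -, -, hpq⟩ := ne_zero_of_pos_mul_mul_div_mul_sq (hpos _ huv)
  have houter := hasDerivAt_const_sub_two_mul_div_sub (deriv (deriv p) u / deriv p u) (deriv p u)
    (hq.differentiable two_ne_zero v).hasDerivAt hpq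
  rw [hinner.deriv_eq, houter.deriv, three_mul_exp_liouvilleSolution (hpos _ huv)]

/-- For C² functions p, q and nonzero constant s, the function
F(u,v) = log(2p′(u)q′(v)/(−3s(p(u)−q(v))²)) satisfies Liouville's equation
∂_v ∂_u F = 3s·e^F on an open set where the argument of the log is positive. -/
theorem stmt_9 (s : ℝ) (hs : s ≠ 0)
    (p q : ℝ → ℝ) (hp : ContDiff ℝ 2 p) (hq : ContDiff ℝ 2 q)
    (U : Set (ℝ × ℝ)) (hU : IsOpen U)
    (hne : ∀ z ∈ U, p z.1 ≠ q z.2)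
    (hpos : ∀ z ∈ U, 0 < 2 * deriv p z.1 * deriv q z.2 / (-3 * s * (p z.1 - q z.2) ^ 2))
    (F : ℝ → ℝ → ℝ)
    (hF : ∀ u v, F u v =
      Real.log (2 * deriv p u * deriv q v / (-3 * s * (p u - q v) ^ 2))) :
    ∀ u v, (u, v) ∈ U →
      deriv (fun v' => deriv (fun u' => F u' v') u) v = 3 * s * Real.exp (F u v) :=
  stmt_9_general s p q hp hq U hU hpos F hF
end
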